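/- arXiv:2202.09771 — 3 statements merged into one kernel-verified Lean document; each statement's English description precedes it below -/
import Mathlib

section
/- Let f : ℝ → ℝ be a continuous τ-periodic function with τ > 0. Then for any t ≥ s, ∫_s^t f(u) du ≤ ⌊(t-s)/τ⌋ · ∫_0^τ f(u) du + 2 ∫_0^τ |f(u)| du. -/
open MeasureTheory intervalIntegral

theorem periodic_integral_upper_bound
    (τ : ℝ) (hτ : 0 < τ) (f : ℝ → ℝ)
    (hcont : Continuous f)
    (hper : ∀ u : ℝ, f (u + τ) = f u) :
    ∀ s t : ℝ, s ≤ t →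
      ∫ u in s..t, f u ≤
        (⌊(t - s) / τ⌋ : ℝ) * (∫ u in (0:ℝ)..τ, f u) + 2 * ∫ u in (0:ℝ)..τ, |f u| := by
  intro s t hst
  have hperf : Function.Periodic f τ := hper
  have hperabs : Function.Periodic (fun u => |f u|) τ := fun u => by simp [hper u]
  set n : ℤ := ⌊(t - s) / τ⌋ with hn
  have hn0 : 0 ≤ n := Int.le_floor.2 (by simpa using div_nonneg (by linarith) hτ.le)
  have h1 : s + n • τ ≤ t := by
    have := Int.floor_le ((t - s) / τ)
    have : (n : ℝ) * τ ≤ t - s := by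
      rw [← le_div_iff₀ hτ]; exact this
    simp only [zsmul_eq_mul]; linarith
  have h2 : t ≤ s + n • τ + τ := by
    have := Int.lt_floor_add_one ((t - s) / τ)
    have : t - s < ((n : ℝ) + 1) * τ := by
      rw [← div_lt_iff₀ hτ]; linarith
    simp only [zsmul_eq_mul]; nlinarith
  have hint : ∀ a b : ℝ, IntervalIntegrable f volume a b :=
    fun a b => hcont.intervalIntegrable a b
  have hsplit : ∫ u in s..t, f u = (∫ u in s..(s + n • τ), f u) + ∫ u in (s + n • τ)..t, f u :=
    (integral_add_adjacent_intervals (hint _ _) (hint _ _)).symm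
  have hfirst : ∫ u in s..(s + n • τ), f u = (n : ℝ) * ∫ u in (0:ℝ)..τ, f u := by
    rw [hperf.intervalIntegral_add_zsmul_eq n s hint]
    rw [show ∫ u in s..s+τ, f u = ∫ u in (0:ℝ)..τ, f u by simpa using hperf.intervalIntegral_add_eq s 0]
    simp
  have habsint : ∀ a b : ℝ, IntervalIntegrable (fun u => |f u|) volume a b :=
    fun a b => (hcont.abs).intervalIntegrable a b
  have hrem : ∫ u in (s + n • τ)..t, f u ≤ ∫ u in (0:ℝ)..τ, |f u| := by
    calc ∫ u in (s + n • τ)..t, f u ≤ ∫ u in (s + n • τ)..t, |f u| := by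
          apply integral_mono_on h1 (hint _ _) (habsint _ _)
          intro x _; exact le_abs_self _
      _ ≤ ∫ u in (s + n • τ)..(s + n • τ + τ), |f u| := by
          apply integral_mono_interval (le_refl _) h1 h2 _ (habsint _ _)
          filter_upwards with x using abs_nonneg _
      _ = ∫ u in (0:ℝ)..τ, |f u| := by
          have := hperabs.intervalIntegral_add_eq (s + n • τ) 0
          simpa using this
  have habsnn : 0 ≤ ∫ u in (0:ℝ)..τ, |f u| := by
    apply integral_nonneg hτ.le
    intro x _; exact abs_nonneg _
  rw [hsplit, hfirst]
  linarith
end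

section
/- With γ and φ as defined from constants K₁ ≥ 0, K₂ > 0, L ≥ 0 (γ(v) = (K₁+K₂)v·1_{[0,L]}(v) − K₂v, φ'(r) = e^{-∫_0^r γ} ∫_r^∞ l e^{∫_0^l γ} dl), the derivative φ' is bounded above and below by positive constants: 0 < C₊ := inf_{r≥0} φ'(r) ≤ sup_{r≥0} φ'(r) =: C* < ∞. Consequently, C₊ r ≤ φ(r) ≤ C* r for all r ≥ 0. -/
open MeasureTheory intervalIntegral Set Real

/-- `γ(v) = (K₁+K₂) v 1_{[0,L]}(v) - K₂ v`. -/
noncomputable def gam (K₁ K₂ L : ℝ) (v : ℝ) : ℝ :=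
  Set.indicator (Set.Icc 0 L) (fun w => (K₁ + K₂) * w) v - K₂ * v

/-- `φ'(r) = e^{-∫_0^r γ} ∫_r^∞ l e^{∫_0^l γ} dl`. -/
noncomputable def phiDeriv (K₁ K₂ L : ℝ) (r : ℝ) : ℝ :=
  Real.exp (-∫ v in (0:ℝ)..r, gam K₁ K₂ L v) *
    ∫ l in Set.Ioi r, l * Real.exp (∫ v in (0:ℝ)..l, gam K₁ K₂ L v)

/-- `φ(r) = ∫_0^r φ'(u) du`. -/
noncomputable def phiFun (K₁ K₂ L : ℝ) (r : ℝ) : ℝ :=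
  ∫ u in (0:ℝ)..r, phiDeriv K₁ K₂ L u

/-!
Write `Γ(x) = ∫₀ˣ γ`. For `x ≥ 0` one has `Γ(x) = (K₁+K₂) min(x,L)²/2 - K₂x²/2`, so for
`0 ≤ r ≤ l` the increment `Γ(l) - Γ(r)` exceeds the Gaussian increment `-K₂(l² - r²)/2` by an
amount in `[0, (K₁+K₂)L²/2]`. Since `φ'(r) = ∫_r^∞ l e^{Γ(l)-Γ(r)} dl` and
`∫_r^∞ l e^{-K₂(l²-r²)/2} dl = 1/K₂`, this gives `1/K₂ ≤ φ'(r) ≤ e^{(K₁+K₂)L²/2}/K₂`;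
as `φ'` is continuous on `[0, ∞)`, these bounds integrate to the bounds on `φ`.
-/

open Filter Topology

theorem integrable_mul_exp_neg_sq_sub_sq {b : ℝ} (hb : 0 < b) (r : ℝ) :
    Integrable fun l : ℝ => l * exp (-(b * (l ^ 2 - r ^ 2) / 2)) := by
  refine ((integrable_mul_exp_neg_mul_sq (half_pos hb)).const_mul (exp (b * r ^ 2 / 2))).congr
    (ae_of_all _ fun l => ?_)
  dsimp only
  rw [mul_left_comm, ← exp_add]
  ring_nf

theorem integral_Ioi_mul_exp_neg_sq_sub_sq {b : ℝ} (hb : 0 < b) (r : ℝ) :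
    ∫ l in Ioi r, l * exp (-(b * (l ^ 2 - r ^ 2) / 2)) = 1 / b := by
  have hderiv : ∀ x ∈ Ici r, HasDerivAt (fun l => -exp (-(b * (l ^ 2 - r ^ 2) / 2)) / b)
      (x * exp (-(b * (x ^ 2 - r ^ 2) / 2))) x := by
    intro x _
    have := ((((hasDerivAt_pow 2 x).sub_const (r ^ 2)).const_mul b).div_const 2).neg.exp.neg
      |>.div_const b
    refine this.congr_deriv ?_
    simp only [Pi.neg_apply]
    field_simp
    ring
  have hlim : Tendsto (fun l => -exp (-(b * (l ^ 2 - r ^ 2) / 2)) / b) atTop (𝓝 0) := by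
    have : Tendsto (fun l : ℝ => -(b * (l ^ 2 - r ^ 2) / 2)) atTop atBot := by
      refine tendsto_neg_atTop_atBot.comp (Tendsto.atTop_div_const two_pos ?_)
      exact Tendsto.const_mul_atTop hb
        (tendsto_atTop_add_const_right _ _ (tendsto_pow_atTop two_ne_zero))
    simpa using (tendsto_exp_atBot.comp this).neg.div_const b
  rw [integral_Ioi_of_hasDerivAt_of_tendsto' hderiv
    (integrable_mul_exp_neg_sq_sub_sq hb r).integrableOn hlim]
  simp [neg_div]

noncomputable def gamPrimitive (K₁ K₂ L x : ℝ) : ℝ :=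
  ∫ v in (0:ℝ)..x, gam K₁ K₂ L v

section
variable {K₁ K₂ L : ℝ}

@[simp]
theorem gamPrimitive_zero : gamPrimitive K₁ K₂ L 0 = 0 :=
  intervalIntegral.integral_same

theorem intervalIntegrable_indicator_Icc_const_mul (c a b : ℝ) :
    IntervalIntegrable ((Icc 0 L).indicator fun w => c * w) volume a b :=
  ((continuous_const_mul c).integrableOn_Icc.integrable_indicator
    measurableSet_Icc).intervalIntegrable

@[fun_prop]
theorem continuous_gamPrimitive : Continuous (gamPrimitive K₁ K₂ L) :=
  intervalIntegral.continuous_primitive (fun a b =>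
    (intervalIntegrable_indicator_Icc_const_mul _ a b).sub
      ((continuous_const_mul K₂).intervalIntegrable a b)) 0

theorem gamPrimitive_eq {x : ℝ} (hL : 0 ≤ L) (hx : 0 ≤ x) :
    gamPrimitive K₁ K₂ L x = (K₁ + K₂) * min x L ^ 2 / 2 - K₂ * x ^ 2 / 2 := by
  have hset : Ioc 0 x ∩ Icc 0 L = Ioc 0 (min x L) := by
    ext v
    simp only [mem_inter_iff, mem_Ioc, mem_Icc, le_min_iff]
    grind
  have hind : ∫ v in (0:ℝ)..x, (Icc 0 L).indicator (fun w => (K₁ + K₂) * w) v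
      = (K₁ + K₂) * min x L ^ 2 / 2 := by
    rw [intervalIntegral.integral_of_le hx, setIntegral_indicator measurableSet_Icc, hset,
      ← intervalIntegral.integral_of_le (le_min hx hL), intervalIntegral.integral_const_mul,
      integral_id]
    ring
  unfold gamPrimitive gam
  rw [intervalIntegral.integral_sub (intervalIntegrable_indicator_Icc_const_mul _ 0 x)
    ((continuous_const_mul K₂).intervalIntegrable 0 x), hind,
    intervalIntegral.integral_const_mul, integral_id]
  ring

theorem gamPrimitive_sub_bounds {r l : ℝ} (hK : 0 ≤ K₁ + K₂) (hL : 0 ≤ L) (hr : 0 ≤ r)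
    (hrl : r ≤ l) :
    -(K₂ * (l ^ 2 - r ^ 2) / 2) ≤ gamPrimitive K₁ K₂ L l - gamPrimitive K₁ K₂ L r ∧
      gamPrimitive K₁ K₂ L l - gamPrimitive K₁ K₂ L r
        ≤ (K₁ + K₂) * L ^ 2 / 2 - K₂ * (l ^ 2 - r ^ 2) / 2 := by
  rw [gamPrimitive_eq hL hr, gamPrimitive_eq hL (hr.trans hrl)]
  have h₀ : 0 ≤ min r L := le_min hr hL
  have h₁ : min r L ≤ min l L := min_le_min_right L hrl
  have h₂ : min l L ≤ L := min_le_right l L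
  constructor <;> nlinarith [mul_le_mul h₁ h₁ h₀ (h₀.trans h₁), mul_le_mul h₂ h₂ (h₀.trans h₁) hL,
    mul_nonneg hK (mul_nonneg h₀ h₀)]

theorem mul_exp_gamPrimitive_sub_bounds {r l : ℝ} (hK : 0 ≤ K₁ + K₂) (hL : 0 ≤ L) (hr : 0 ≤ r)
    (hrl : r ≤ l) :
    l * exp (-(K₂ * (l ^ 2 - r ^ 2) / 2))
        ≤ l * exp (gamPrimitive K₁ K₂ L l - gamPrimitive K₁ K₂ L r) ∧
      l * exp (gamPrimitive K₁ K₂ L l - gamPrimitive K₁ K₂ L r)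
        ≤ exp ((K₁ + K₂) * L ^ 2 / 2) * (l * exp (-(K₂ * (l ^ 2 - r ^ 2) / 2))) := by
  obtain ⟨hlow, hupp⟩ := gamPrimitive_sub_bounds hK hL hr hrl
  have hl : 0 ≤ l := hr.trans hrl
  refine ⟨by gcongr, ?_⟩
  rw [mul_left_comm, ← exp_add]
  gcongr
  linarith

theorem integrableOn_Ioi_mul_exp_gamPrimitive_sub {r : ℝ} (hK : 0 ≤ K₁ + K₂) (hK₂ : 0 < K₂)
    (hL : 0 ≤ L) (hr : 0 ≤ r) :
    IntegrableOn (fun l => l * exp (gamPrimitive K₁ K₂ L l - gamPrimitive K₁ K₂ L r)) (Ioi r) := by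
  have hcont : Continuous fun l => l * exp (gamPrimitive K₁ K₂ L l - gamPrimitive K₁ K₂ L r) := by
    fun_prop
  refine ((integrable_mul_exp_neg_sq_sub_sq hK₂ r).const_mul
    (exp ((K₁ + K₂) * L ^ 2 / 2))).integrableOn.mono' hcont.aestronglyMeasurable
    ((ae_restrict_iff' measurableSet_Ioi).2 (ae_of_all _ fun l hl => ?_))
  obtain ⟨hlow, hupp⟩ := mul_exp_gamPrimitive_sub_bounds hK hL hr hl.le
  rw [Real.norm_of_nonneg ((mul_nonneg (hr.trans hl.le) (exp_nonneg _)).trans hlow)]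
  exact hupp

theorem phiDeriv_eq_integral (r : ℝ) :
    phiDeriv K₁ K₂ L r
      = ∫ l in Ioi r, l * exp (gamPrimitive K₁ K₂ L l - gamPrimitive K₁ K₂ L r) := by
  rw [phiDeriv, ← MeasureTheory.integral_const_mul]
  congr 1 with l
  rw [exp_sub, exp_neg, gamPrimitive, gamPrimitive]
  ring

theorem phiDeriv_mem_Icc {r : ℝ} (hK : 0 ≤ K₁ + K₂) (hK₂ : 0 < K₂) (hL : 0 ≤ L) (hr : 0 ≤ r) :
    phiDeriv K₁ K₂ L r ∈ Icc (1 / K₂) (exp ((K₁ + K₂) * L ^ 2 / 2) / K₂) := by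
  have hgauss := (integrable_mul_exp_neg_sq_sub_sq hK₂ r).integrableOn (s := Ioi r)
  have hint := integrableOn_Ioi_mul_exp_gamPrimitive_sub hK hK₂ hL hr
  have hbounds := fun l (hl : l ∈ Ioi r) => mul_exp_gamPrimitive_sub_bounds hK hL hr hl.out.le
  rw [phiDeriv_eq_integral]
  constructor
  · calc 1 / K₂ = ∫ l in Ioi r, l * exp (-(K₂ * (l ^ 2 - r ^ 2) / 2)) :=
          (integral_Ioi_mul_exp_neg_sq_sub_sq hK₂ r).symm
      _ ≤ _ := setIntegral_mono_on hgauss hint measurableSet_Ioi fun l hl => (hbounds l hl).1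
  · calc _ ≤ ∫ l in Ioi r,
            exp ((K₁ + K₂) * L ^ 2 / 2) * (l * exp (-(K₂ * (l ^ 2 - r ^ 2) / 2))) :=
          setIntegral_mono_on hint (hgauss.const_mul _) measurableSet_Ioi
            fun l hl => (hbounds l hl).2
      _ = exp ((K₁ + K₂) * L ^ 2 / 2) / K₂ := by
          rw [MeasureTheory.integral_const_mul, integral_Ioi_mul_exp_neg_sq_sub_sq hK₂ r,
            mul_one_div]

theorem continuousOn_phiDeriv (hK : 0 ≤ K₁ + K₂) (hK₂ : 0 < K₂) (hL : 0 ≤ L) :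
    ContinuousOn (phiDeriv K₁ K₂ L) (Ici 0) := by
  have hint : IntegrableOn (fun l => l * exp (gamPrimitive K₁ K₂ L l)) (Ioi 0) := by
    simpa using integrableOn_Ioi_mul_exp_gamPrimitive_sub hK hK₂ hL le_rfl
  exact (continuous_gamPrimitive.neg.rexp.continuousOn).mul hint.continuousOn_Ici_primitive_Ioi

end

theorem phiDeriv_bounds
    (K₁ K₂ L : ℝ) (hK₁ : 0 ≤ K₁) (hK₂ : 0 < K₂) (hL : 0 ≤ L) :
    BddAbove (phiDeriv K₁ K₂ L '' Set.Ici (0:ℝ)) ∧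
    0 < sInf (phiDeriv K₁ K₂ L '' Set.Ici (0:ℝ)) ∧
    (∀ r : ℝ, 0 ≤ r →
      sInf (phiDeriv K₁ K₂ L '' Set.Ici (0:ℝ)) * r ≤ phiFun K₁ K₂ L r ∧
      phiFun K₁ K₂ L r ≤ sSup (phiDeriv K₁ K₂ L '' Set.Ici (0:ℝ)) * r) := by
  have hK : 0 ≤ K₁ + K₂ := by linarith
  have hmaps : MapsTo (phiDeriv K₁ K₂ L) (Ici 0)
      (Icc (1 / K₂) (exp ((K₁ + K₂) * L ^ 2 / 2) / K₂)) :=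
    fun r hr => phiDeriv_mem_Icc hK hK₂ hL hr
  have hbddAbove : BddAbove (phiDeriv K₁ K₂ L '' Ici 0) := bddAbove_Icc.mono hmaps.image_subset
  have hbddBelow : BddBelow (phiDeriv K₁ K₂ L '' Ici 0) := bddBelow_Icc.mono hmaps.image_subset
  refine ⟨hbddAbove, (one_div_pos.2 hK₂).trans_le
    (le_csInf (nonempty_Ici.image _) fun _ ⟨r, hr, hφ⟩ => hφ ▸ (hmaps hr).1), fun r hr => ?_⟩
  have hint : IntervalIntegrable (phiDeriv K₁ K₂ L) volume 0 r :=
    ((continuousOn_phiDeriv hK hK₂ hL).mono Icc_subset_Ici_self).intervalIntegrable_of_Icc hr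
  have hmem : ∀ u ∈ Icc 0 r, phiDeriv K₁ K₂ L u ∈ phiDeriv K₁ K₂ L '' Ici 0 :=
    fun u hu => mem_image_of_mem _ hu.1
  constructor
  · simpa [phiFun, mul_comm] using intervalIntegral.integral_mono_on hr intervalIntegrable_const
      hint fun u hu => csInf_le hbddBelow (hmem u hu)
  · simpa [phiFun, mul_comm] using intervalIntegral.integral_mono_on hr hint
      intervalIntegrable_const fun u hu => le_csSup hbddAbove (hmem u hu)
end

section
/- Let λ₁ : ℝ → ℝ be continuous and τ-periodic and α₀ > 0. Define λ_{α₀,τ} := sup over θ ≤ 0 and α, β ∈ [0,τ] of [ (1/τ)(θ+α)∫_0^τ(λ₁(u)+2α₀)du − ∫_β^{α+β}(λ₁(u)+2α₀)du ]. If ∫_0^τ(λ₁(u)+2α₀)du ≥ 0, then λ_{α₀,τ} is finite, and for all t ∈ ℝ and θ ≤ 0: −∫_{t+θ}^t (λ₁(u)+2α₀) du ≤ λ_{α₀,τ} + (θ/τ)·∫_0^τ(λ₁(u)+2α₀)du ≤ λ_{α₀,τ}. -/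
open MeasureTheory intervalIntegral Set Real

theorem lambda_sup_bound
    (τ α₀ : ℝ) (hτ : 0 < τ) (hα₀ : 0 < α₀) (lam : ℝ → ℝ)
    (hcont : Continuous lam)
    (hper : ∀ u : ℝ, lam (u + τ) = lam u)
    (hmean : 0 ≤ ∫ u in (0:ℝ)..τ, (lam u + 2 * α₀))
    (S : Set ℝ)
    (hS : S = {x : ℝ | ∃ θ ≤ (0:ℝ), ∃ a ∈ Icc (0:ℝ) τ, ∃ b ∈ Icc (0:ℝ) τ,
      x = (1 / τ) * (θ + a) * (∫ u in (0:ℝ)..τ, (lam u + 2 * α₀))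
        - ∫ u in b..(a + b), (lam u + 2 * α₀)}) :
    BddAbove S ∧
    ∀ t θ : ℝ, θ ≤ 0 →
      (-∫ u in (t + θ)..t, (lam u + 2 * α₀)) ≤
          sSup S + (θ / τ) * ∫ u in (0:ℝ)..τ, (lam u + 2 * α₀) ∧
        sSup S + (θ / τ) * (∫ u in (0:ℝ)..τ, (lam u + 2 * α₀)) ≤ sSup S := by
  set g : ℝ → ℝ := fun u => lam u + 2 * α₀ with hg_def
  have hg : Continuous g := by continuity
  have hgper : Function.Periodic g τ := fun x => by simp [hg_def, hper x]
  have hint : ∀ t₁ t₂ : ℝ, IntervalIntegrable g MeasureSpace.volume t₁ t₂ :=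
    fun t₁ t₂ => hg.intervalIntegrable t₁ t₂
  set I : ℝ := ∫ u in (0:ℝ)..τ, g u with hI_def
  -- shift invariance by integer multiples of τ
  have hA : ∀ (n : ℤ) (x y : ℝ),
      (∫ u in (x + (n:ℝ)*τ)..(y + (n:ℝ)*τ), g u) = ∫ u in x..y, g u := by
    intro n x y
    rw [← intervalIntegral.integral_comp_add_right g ((n:ℝ)*τ)]
    apply intervalIntegral.integral_congr
    intro u _
    have := (hgper.zsmul n) u
    simpa [zsmul_eq_mul] using this
  -- integral over n periods
  have hB : ∀ (n : ℤ) (x : ℝ), (∫ u in x..(x + (n:ℝ)*τ), g u) = (n:ℝ) * I := by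
    intro n x
    have h1 := hgper.intervalIntegral_add_zsmul_eq n x hint
    have h2 := hgper.intervalIntegral_add_eq x 0
    rw [zsmul_eq_mul] at h1
    rw [h1, h2]
    simp [hI_def, zsmul_eq_mul]
  have hIτ : ∀ x : ℝ, (∫ u in x..(x + τ), g u) = I := by
    intro x
    have := hgper.intervalIntegral_add_eq x 0
    simpa [hI_def] using this
  -- bound on integrals over subintervals of length ≤ τ
  obtain ⟨C, hC⟩ := (isCompact_Icc (a := (0:ℝ)) (b := 2*τ)).exists_bound_of_continuousOn
    hg.continuousOn
  have hbound : ∀ a b : ℝ, a ∈ Icc (0:ℝ) τ → b ∈ Icc (0:ℝ) τ →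
      |∫ u in b..(a + b), g u| ≤ C * τ := by
    intro a b ha hb
    have h1 : ‖∫ u in b..(a + b), g u‖ ≤ C * |a + b - b| := by
      apply intervalIntegral.norm_integral_le_of_norm_le_const
      intro x hx
      apply hC
      have hle : b ≤ a + b := by linarith [ha.1]
      rw [Set.uIoc_of_le hle] at hx
      exact ⟨by linarith [hb.1, hx.1], by linarith [ha.2, hb.2, hx.2]⟩
    have : |a + b - b| = a := by rw [abs_of_nonneg (by linarith [ha.1])]; ring
    rw [this] at h1
    calc |∫ u in b..(a + b), g u| ≤ C * a := h1
      _ ≤ C * τ := by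
          have hC0 : 0 ≤ C := le_trans (abs_nonneg _) (hC 0 ⟨le_refl _, by linarith⟩)
          exact mul_le_mul_of_nonneg_left ha.2 hC0
  have hBdd : BddAbove S := by
    refine ⟨I + C * τ, ?_⟩
    rintro x hx
    rw [hS] at hx
    obtain ⟨θ, hθ, a, ha, b, hb, rfl⟩ := hx
    have h1 : (1 / τ) * (θ + a) * I ≤ I := by
      have h2 : (1 / τ) * (θ + a) ≤ 1 := by
        rw [div_mul_eq_mul_div, one_mul, div_le_one hτ]
        linarith [ha.2]
      calc (1 / τ) * (θ + a) * I ≤ 1 * I := mul_le_mul_of_nonneg_right h2 hmean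
        _ = I := one_mul I
    have h3 : -(∫ u in b..(a + b), g u) ≤ C * τ := by
      have := hbound a b ha hb
      linarith [neg_abs_le (∫ u in b..(a + b), g u)]
    have : (1 / τ) * (θ + a) * I - (∫ u in b..(a + b), g u) ≤ I + C * τ := by linarith
    exact this
  refine ⟨hBdd, ?_⟩
  intro t θ hθ
  -- decompose t and θ
  set m : ℤ := ⌊t / τ⌋ with hm_def
  set b : ℝ := t - (m:ℝ) * τ with hb_def
  have hb0 : 0 ≤ b := by
    have := Int.floor_le (t / τ)
    have : (m:ℝ) * τ ≤ t := by
      rw [hm_def]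
      calc (⌊t / τ⌋ : ℝ) * τ ≤ (t / τ) * τ := by
            exact mul_le_mul_of_nonneg_right (Int.floor_le _) hτ.le
        _ = t := by field_simp
    linarith
  have hbτ : b < τ := by
    have h1 : t / τ < (m:ℝ) + 1 := Int.lt_floor_add_one (t / τ)
    have h2 : t < ((m:ℝ) + 1) * τ := by
      calc t = (t / τ) * τ := by field_simp
        _ < ((m:ℝ) + 1) * τ := by exact mul_lt_mul_of_pos_right h1 hτ
    rw [hb_def]; nlinarith
  set n : ℤ := ⌈-θ / τ⌉ with hn_def
  set ρ : ℝ := θ + (n:ℝ) * τ with hρ_def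
  have hρ0 : 0 ≤ ρ := by
    have h1 : -θ / τ ≤ (n:ℝ) := Int.le_ceil _
    have : -θ ≤ (n:ℝ) * τ := by
      calc -θ = (-θ / τ) * τ := by field_simp
        _ ≤ (n:ℝ) * τ := mul_le_mul_of_nonneg_right h1 hτ.le
    rw [hρ_def]; linarith
  have hρτ : ρ < τ := by
    have h1 : (n:ℝ) < -θ / τ + 1 := Int.ceil_lt_add_one _
    have : (n:ℝ) * τ < -θ + τ := by
      calc (n:ℝ) * τ < (-θ / τ + 1) * τ := mul_lt_mul_of_pos_right h1 hτ
        _ = -θ + τ := by field_simp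
    rw [hρ_def]; linarith
  -- compute the integral
  obtain ⟨J, hJ⟩ : ∃ J : ℝ, (∫ u in (b + ρ)..(b + τ), g u) = J := ⟨_, rfl⟩
  have key : (∫ u in (t + θ)..t, g u) = (n:ℝ) * I + J - I := by
    have e1 : (∫ u in (t + θ)..t, g u) = ∫ u in (b + θ)..b, g u := by
      have := hA m (b + θ) b
      rw [hb_def] at this ⊢
      rw [← this]
      congr 1 <;> ring
    have e2 : (∫ u in (b + θ)..(b + ρ), g u) = (n:ℝ) * I := by
      have := hB n (b + θ)
      rw [← this]
      congr 1
      rw [hρ_def]; ring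
    have e3 : (∫ u in (b + θ)..b, g u)
        = (∫ u in (b + θ)..(b + ρ), g u) + ∫ u in (b + ρ)..b, g u :=
      (intervalIntegral.integral_add_adjacent_intervals (hint _ _) (hint _ _)).symm
    have e4 : (∫ u in (b + ρ)..b, g u)
        = (∫ u in (b + ρ)..(b + τ), g u) + ∫ u in (b + τ)..b, g u :=
      (intervalIntegral.integral_add_adjacent_intervals (hint _ _) (hint _ _)).symm
    have e5 : (∫ u in (b + τ)..b, g u) = -I := by
      rw [intervalIntegral.integral_symm, hIτ b]
    rw [e1, e3, e2, e4, e5, hJ]; ring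
  -- construct the witness element
  set k : ℤ := ⌊(b + ρ) / τ⌋ with hk_def
  set b' : ℝ := b + ρ - (k:ℝ) * τ with hb'_def
  have hb'0 : 0 ≤ b' := by
    have : (k:ℝ) * τ ≤ b + ρ := by
      calc (k:ℝ) * τ ≤ ((b + ρ) / τ) * τ :=
            mul_le_mul_of_nonneg_right (Int.floor_le _) hτ.le
        _ = b + ρ := by field_simp
    rw [hb'_def]; linarith
  have hb'τ : b' < τ := by
    have h1 : (b + ρ) / τ < (k:ℝ) + 1 := Int.lt_floor_add_one _
    have : b + ρ < ((k:ℝ) + 1) * τ := by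
      calc b + ρ = ((b + ρ) / τ) * τ := by field_simp
        _ < ((k:ℝ) + 1) * τ := mul_lt_mul_of_pos_right h1 hτ
    rw [hb'_def]; nlinarith
  set a : ℝ := τ - ρ with ha_def
  have ha_mem : a ∈ Icc (0:ℝ) τ := ⟨by rw [ha_def]; linarith, by rw [ha_def]; linarith⟩
  have hb'_mem : b' ∈ Icc (0:ℝ) τ := ⟨hb'0, hb'τ.le⟩
  have hshift : (∫ u in b'..(a + b'), g u) = ∫ u in (b + ρ)..(b + τ), g u := by
    have := hA k b' (a + b')
    rw [← this]
    congr 1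
    · rw [hb'_def]; ring
    · rw [hb'_def, ha_def]; ring
  set x : ℝ := (1 / τ) * ((0:ℝ) + a) * I - ∫ u in b'..(a + b'), g u with hx_def
  have hxS : x ∈ S := by
    rw [hS]
    exact ⟨0, le_refl 0, a, ha_mem, b', hb'_mem, rfl⟩
  have hx_le : x ≤ sSup S := le_csSup hBdd hxS
  constructor
  · -- main inequality
    have hx_eq : x = -(∫ u in (t + θ)..t, g u) - (θ / τ) * I := by
      have hθτ : θ / τ * I = ρ / τ * I - (n:ℝ) * I := by
        rw [hρ_def]; field_simp; ring
      rw [hx_def, hshift, hJ, key, ha_def, hθτ]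
      field_simp
      ring
    have : -(∫ u in (t + θ)..t, g u) - (θ / τ) * I ≤ sSup S := hx_eq ▸ hx_le
    have hgoal : -(∫ u in (t + θ)..t, g u) ≤ sSup S + (θ / τ) * I := by linarith
    simpa [hg_def, hI_def] using hgoal
  · have h1 : (θ / τ) * I ≤ 0 :=
      mul_nonpos_of_nonpos_of_nonneg (div_nonpos_of_nonpos_of_nonneg hθ hτ.le) hmean
    have : sSup S + (θ / τ) * I ≤ sSup S := by linarith
    simpa [hg_def, hI_def] using this
end
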